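/- For every positive integer a the following identities hold in H_c: x^a y^a = ∏_{i=0}^{a−1} (c_0(k + i) + Σ_{q=0}^{n−1} β_{q+i} e_q) and y^a x^a = (−1)^a ∏_{i=0}^{a−1} (c_0(−k + i) + Σ_{q=0}^{n−1} β_{q+i} e_{−q}). Consequently, for every integer q, x^a y^a e_q = e_q ∏_{i=0}^{a−1} (c_0(k + i) + β_{q+i}) and y^a x^a e_q = (−1)^a e_q ∏_{i=0}^{a−1} (c_0(−k + i) + β_{−q+i}). -/

import Mathlib

noncomputable section

open Polynomial

/-- The primitive `n`-th root of unity `ε = exp(2πi/n)`. -/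
def eps (n : ℕ) : ℂ := Complex.exp (2 * Real.pi * Complex.I / n)

/-- The constants `α_q = (1/c_0) Σ_{i=1}^{n-1} c_i ε^{-iq}/(ε^i − 1)`. -/
def alphaOf (n : ℕ) (c : ℤ → ℂ) (q : ℤ) : ℂ :=
  (c 0)⁻¹ * ∑ i ∈ Finset.Ico 1 n, c (i : ℤ) * eps n ^ (-(i : ℤ) * q) / (eps n ^ (i : ℕ) - 1)

/-- The algebra `H_c = (ℂ[x,y] # 𝔻_n)/(xy − yx − c)` for the dicyclic group `𝔻_n`,
presented by its generators, relations, and PBW basis. -/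
structure HcSetup (n : ℕ) where
  hn : 0 < n
  heven : Even n
  H : Type
  [ring : Ring H]
  [alg : Algebra ℂ H]
  x : H
  y : H
  g : H
  h : H
  c : ℤ → ℂ
  c_per : ∀ i : ℤ, c (i + n) = c i
  c_symm : ∀ i : ℤ, c (-i) = c i
  c0_ne : c 0 ≠ 0
  rel_gx : g * x = eps n • (x * g)
  rel_gy : g * y = (eps n)⁻¹ • (y * g)
  rel_hx : h * x = y * h
  rel_hy : h * y = -(x * h)
  rel_comm : x * y - y * x = ∑ i ∈ Finset.range n, c (i : ℤ) • g ^ i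
  rel_gn : g ^ n = 1
  rel_h2 : h ^ 2 = g ^ (n / 2)
  rel_hg : h * g = g ^ (n - 1) * h
  basis : Module.Basis (ℕ × ℕ × Fin n × Fin 2) ℂ H
  basis_eq : ∀ p : ℕ × ℕ × Fin n × Fin 2,
    basis p = x ^ p.1 * y ^ p.2.1 * g ^ (p.2.2.1 : ℕ) * h ^ (p.2.2.2 : ℕ)

attribute [instance] HcSetup.ring HcSetup.alg

namespace HcSetup

variable {n : ℕ}

/-- `k = (1/c_0)(xy + Σ_{i=1}^{n-1} c_i g^i/(ε^i − 1)) − 1/2`. -/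
def k (S : HcSetup n) : S.H :=
  (S.c 0)⁻¹ • (S.x * S.y + ∑ i ∈ Finset.Ico 1 n, (S.c (i : ℤ) / (eps n ^ (i : ℕ) - 1)) • S.g ^ i)
    - (2 : ℂ)⁻¹ • (1 : S.H)

/-- `e_q = (1/n) Σ_{i=0}^{n-1} ε^{iq} g^i`. -/
def e (S : HcSetup n) (q : ℤ) : S.H :=
  (n : ℂ)⁻¹ • ∑ i ∈ Finset.range n, eps n ^ ((i : ℤ) * q) • S.g ^ i

/-- `α_q = (1/c_0) Σ_{i=1}^{n-1} c_i ε^{-iq}/(ε^i − 1)`. -/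
def αc (S : HcSetup n) (q : ℤ) : ℂ := alphaOf n S.c q

end HcSetup

/-- A trace on an algebra: a linear map with `T(ab) = T(ba)`. -/
def IsTrace {n : ℕ} (S : HcSetup n) (T : S.H →ₗ[ℂ] ℂ) : Prop :=
  ∀ a b : S.H, T (a * b) = T (b * a)


/-!
Conjugation by the unit `h` is an algebra automorphism of `H_c` sending `x ↦ y`, `y ↦ -x`,
`k ↦ -k` and `e_q ↦ e_{-q}`; it turns the identities for `x^a y^a` into those for `y^a x^a`.
For `x^a y^a`, put `F_i = c_0 (k + i) + Σ_q β_{q+i} e_q`. Then `xy = F_0`, and `F_i y = y F_{i+1}`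
because `[k, y] = y`, `e_q y = y e_{q-1}` and `β` is `n`-periodic; induction on `a` gives
`x^a y^a = F_0 ⋯ F_{a-1}`. Finally the `e_q` are orthogonal idempotents commuting with `k`, so
`F_i e_q = e_q (c_0 (k + i) + β_{q+i})`.
-/

open Finset

lemma pow_pred_pow_of_pow_eq_one {M : Type*} [Monoid M] {w : M} {n i : ℕ} (hw : w ^ n = 1)
    (hi : i ≤ n) : (w ^ (n - 1)) ^ i = w ^ (n - i) := by
  obtain _ | j := i
  · simp [hw]
  · have hexp : (n - 1) * (j + 1) = n * j + (n - (j + 1)) := by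
      zify [hi, (by omega : 1 ≤ n)]; ring
    rw [← pow_mul, hexp, pow_add, pow_mul, hw, one_pow, one_mul]

lemma mul_geom_sum_of_pow_eq_one {R : Type*} [Ring R] {w : R} {n : ℕ} (hw : w ^ n = 1) :
    w * ∑ i ∈ range n, w ^ i = ∑ i ∈ range n, w ^ i := by
  have h := mul_geom_sum w n
  rwa [hw, sub_self, sub_mul, one_mul, sub_eq_zero] at h

lemma geom_sum_pow_pred_of_pow_eq_one {R : Type*} [Ring R] {w : R} {n : ℕ} (hw : w ^ n = 1) :
    ∑ i ∈ range n, (w ^ (n - 1)) ^ i = ∑ i ∈ range n, w ^ i := by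
  calc ∑ i ∈ range n, (w ^ (n - 1)) ^ i
      = ∑ i ∈ range n, (fun j => w ^ (j + 1)) (n - 1 - i) :=
        sum_congr rfl fun i hi => by
          rw [pow_pred_pow_of_pow_eq_one hw (mem_range.1 hi).le]
          congr 1; have := mem_range.1 hi; omega
    _ = w * ∑ i ∈ range n, w ^ i := by
        rw [sum_range_reflect (fun j => w ^ (j + 1)), mul_sum]; simp only [pow_succ']
    _ = ∑ i ∈ range n, w ^ i := mul_geom_sum_of_pow_eq_one hw

lemma zpow_pow_eq_one_of_pow_eq_one {G : Type*} [DivisionMonoid G] {ζ : G} {n : ℕ}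
    (h : ζ ^ n = 1) (q : ℤ) : (ζ ^ q) ^ n = 1 := by
  rw [← zpow_natCast, ← zpow_mul, mul_comm, zpow_mul, zpow_natCast, h, one_zpow]

lemma IsPrimitiveRoot.geom_sum_zpow {K : Type*} [Field K] {ζ : K} {n : ℕ}
    (hζ : IsPrimitiveRoot ζ n) (t : ℤ) :
    ∑ i ∈ range n, (ζ ^ t) ^ i = if (n : ℤ) ∣ t then (n : K) else 0 := by
  split_ifs with h
  · simp [(hζ.zpow_eq_one_iff_dvd t).2 h]
  · have h1 : ζ ^ t - 1 ≠ 0 := sub_ne_zero.2 fun h1 => h ((hζ.zpow_eq_one_iff_dvd t).1 h1)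
    have h2 := mul_geom_sum (ζ ^ t) n
    rwa [zpow_pow_eq_one_of_pow_eq_one hζ.pow_eq_one, sub_self, mul_eq_zero, or_iff_right h1] at h2

lemma Function.Periodic.sum_range_comp_add {M : Type*} [AddCommMonoid M] {φ : ℤ → M} {n : ℕ}
    (hφ : Function.Periodic φ n) (r : ℤ) :
    ∑ q ∈ range n, φ (q + r) = ∑ q ∈ range n, φ q := by
  have shift : ∀ ψ : ℤ → M, Function.Periodic ψ n →
      ∑ q ∈ range n, ψ (q + 1) = ∑ q ∈ range n, ψ q := by
    intro ψ hψ
    cases n with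
    | zero => simp
    | succ m =>
      rw [sum_range_succ, sum_range_succ' (fun q : ℕ => ψ q)]
      have hlast : ψ ((m : ℕ) + 1) = ψ ((0 : ℕ) : ℤ) := by simpa using hψ 0
      push_cast at hlast ⊢
      rw [hlast]
  induction r using Int.induction_on with
  | zero => simp
  | succ r ih =>
    rw [← ih, ← shift _ (hφ.add_const r)]
    exact sum_congr rfl fun q _ => congrArg φ (by ring)
  | pred r ih =>
    rw [← ih, ← shift _ (hφ.add_const (-r - 1))]
    exact sum_congr rfl fun q _ => congrArg φ (by ring)

lemma Function.Periodic.sum_range_ite_dvd_sub {M : Type*} [AddCommMonoid M] {φ : ℤ → M} {n : ℕ}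
    (hn : 0 < n) (hφ : Function.Periodic φ n) (r : ℤ) :
    ∑ q ∈ range n, (if (n : ℤ) ∣ q - r then φ q else 0) = φ r := by
  have hper : Function.Periodic (fun q : ℤ => if (n : ℤ) ∣ q - r then φ q else 0) n := by
    intro q
    simp only [hφ q, add_sub_right_comm, dvd_add_self_right]
  rw [← hper.sum_range_comp_add r, sum_eq_single 0]
  · simp
  · intro q hq hq0
    have hnd : ¬(n : ℤ) ∣ q := by
      rw [Int.natCast_dvd_natCast]
      exact fun hd => hq0 (Nat.eq_zero_of_dvd_of_lt hd (mem_range.1 hq))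
    rw [add_sub_cancel_right, if_neg hnd]
  · simp [hn]

lemma List.prod_map_mul_eq_mul_prod_map {M : Type*} [Monoid M] {ι : Type*} (l : List ι)
    {f f' : ι → M} {e : M} (h : ∀ i, f i * e = e * f' i) :
    (l.map f).prod * e = e * (l.map f').prod := by
  induction l with
  | nil => simp
  | cons i l ih => rw [List.map_cons, List.map_cons, List.prod_cons, List.prod_cons, mul_assoc, ih,
      ← mul_assoc, h, mul_assoc]

lemma isPrimitiveRoot_eps {n : ℕ} (hn : n ≠ 0) : IsPrimitiveRoot (eps n) n :=
  Complex.isPrimitiveRoot_exp n hn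

lemma eps_ne_zero {n : ℕ} (hn : n ≠ 0) : eps n ≠ 0 := (isPrimitiveRoot_eps hn).ne_zero hn

lemma eps_pow_sub_one_ne_zero {n i : ℕ} (hi : i ∈ Ico 1 n) : eps n ^ i - 1 ≠ 0 := by
  obtain ⟨h1, h2⟩ := mem_Ico.1 hi
  exact sub_ne_zero.2 ((isPrimitiveRoot_eps (by omega)).pow_ne_one_of_pos_of_lt (by omega) h2)

namespace HcSetup

variable {n : ℕ} (S : HcSetup n)

lemma x_mul_smul_g : S.x * (eps n • S.g) = S.g * S.x := by
  rw [S.rel_gx, mul_smul_comm]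

lemma y_mul_smul_g : S.y * ((eps n)⁻¹ • S.g) = S.g * S.y := by
  rw [S.rel_gy, mul_smul_comm]

lemma g_pow_mul_x (i : ℕ) : S.g ^ i * S.x = eps n ^ i • (S.x * S.g ^ i) := by
  rw [← (SemiconjBy.pow_right S.x_mul_smul_g i).eq, _root_.smul_pow, mul_smul_comm]

lemma commute_g_xy : Commute S.g (S.x * S.y) := by
  rw [Commute, SemiconjBy, ← mul_assoc, S.rel_gx, smul_mul_assoc, mul_assoc, S.rel_gy,
    mul_smul_comm, smul_smul, mul_inv_cancel₀ (eps_ne_zero S.hn.ne'), one_smul, mul_assoc]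

lemma e_eq_sum_pow (q : ℤ) : S.e q = (n : ℂ)⁻¹ • ∑ i ∈ range n, (eps n ^ q • S.g) ^ i := by
  unfold e
  congr 1
  refine sum_congr rfl fun i _ => ?_
  rw [_root_.smul_pow, ← zpow_natCast, ← zpow_mul, mul_comm]

lemma smul_g_pow_eq_one (q : ℤ) : (eps n ^ q • S.g) ^ n = 1 := by
  rw [_root_.smul_pow, S.rel_gn,
    zpow_pow_eq_one_of_pow_eq_one (isPrimitiveRoot_eps S.hn.ne').pow_eq_one, one_smul]

lemma g_mul_e (q : ℤ) : S.g * S.e q = eps n ^ (-q) • S.e q := by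
  have h := mul_geom_sum_of_pow_eq_one (S.smul_g_pow_eq_one q)
  rw [S.e_eq_sum_pow, mul_smul_comm, smul_comm]
  congr 1
  conv_rhs => rw [← h]
  rw [smul_mul_assoc, smul_smul, ← zpow_add₀ (eps_ne_zero S.hn.ne'), neg_add_cancel, zpow_zero,
    one_smul]

lemma e_mul_e (s q : ℤ) : S.e s * S.e q = if (n : ℤ) ∣ s - q then S.e q else 0 := by
  have hstep : (eps n ^ s • S.g) * S.e q = eps n ^ (s - q) • S.e q := by
    rw [smul_mul_assoc, g_mul_e, smul_smul, ← zpow_add₀ (eps_ne_zero S.hn.ne'), ← sub_eq_add_neg]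
  have hpow : ∀ i : ℕ, (eps n ^ s • S.g) ^ i * S.e q = (eps n ^ (s - q)) ^ i • S.e q := by
    intro i
    induction i with
    | zero => simp
    | succ i ih => rw [pow_succ, mul_assoc, hstep, mul_smul_comm, ih, smul_smul, ← pow_succ']
  rw [S.e_eq_sum_pow s, smul_mul_assoc, sum_mul, sum_congr rfl fun i _ => hpow i, ← sum_smul,
    (isPrimitiveRoot_eps S.hn.ne').geom_sum_zpow, smul_smul]
  split_ifs
  · rw [inv_mul_cancel₀ (Nat.cast_ne_zero.2 S.hn.ne'), one_smul]
  · rw [mul_zero, zero_smul]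

lemma e_mul_x (q : ℤ) : S.e q * S.x = S.x * S.e (q + 1) := by
  have hsemi : SemiconjBy S.x (eps n ^ (q + 1) • S.g) (eps n ^ q • S.g) := by
    rw [SemiconjBy, zpow_add_one₀ (eps_ne_zero S.hn.ne'), mul_smul, mul_smul_comm,
      x_mul_smul_g, smul_mul_assoc]
  rw [S.e_eq_sum_pow, S.e_eq_sum_pow, smul_mul_assoc, mul_smul_comm, sum_mul, mul_sum]
  simp only [(hsemi.pow_right _).eq]

lemma e_mul_y (q : ℤ) : S.e q * S.y = S.y * S.e (q - 1) := by
  have hsemi : SemiconjBy S.y (eps n ^ (q - 1) • S.g) (eps n ^ q • S.g) := by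
    rw [SemiconjBy, zpow_sub_one₀ (eps_ne_zero S.hn.ne'), mul_smul, mul_smul_comm,
      y_mul_smul_g, smul_mul_assoc]
  rw [S.e_eq_sum_pow, S.e_eq_sum_pow, smul_mul_assoc, mul_smul_comm, sum_mul, mul_sum]
  simp only [(hsemi.pow_right _).eq]

lemma e_periodic : Function.Periodic S.e n := fun q => by
  rw [S.e_eq_sum_pow, S.e_eq_sum_pow, zpow_add₀ (eps_ne_zero S.hn.ne'), zpow_natCast,
    (isPrimitiveRoot_eps S.hn.ne').pow_eq_one, mul_one]

lemma commute_g_k : Commute S.g S.k :=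
  ((S.commute_g_xy.add_right (Commute.sum_right _ _ _ fun _ _ =>
    ((Commute.self_pow _ _).smul_right _))).smul_right _).sub_right
    ((Commute.one_right _).smul_right _)

lemma commute_e_k (q : ℤ) : Commute (S.e q) S.k :=
  (Commute.sum_left _ _ _ fun i _ => (S.commute_g_k.pow_left i).smul_left _).smul_left _

def kCorrection : S.H := ∑ i ∈ Ico 1 n, (S.c i / (eps n ^ i - 1)) • S.g ^ i

lemma k_eq : S.k = (S.c 0)⁻¹ • (S.x * S.y + S.kCorrection) - (2 : ℂ)⁻¹ • 1 := rfl

lemma sum_c_smul_g_pow :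
    ∑ i ∈ range n, S.c i • S.g ^ i = S.c 0 • 1 + ∑ i ∈ Ico 1 n, S.c i • S.g ^ i := by
  rw [range_eq_Ico, sum_eq_sum_Ico_succ_bot S.hn, pow_zero, Nat.cast_zero]

lemma sum_smul_g_pow_mul_x (s : Finset ℕ) (a : ℕ → ℂ) :
    (∑ i ∈ s, a i • S.g ^ i) * S.x = S.x * ∑ i ∈ s, (eps n ^ i * a i) • S.g ^ i := by
  rw [sum_mul, mul_sum]
  refine sum_congr rfl fun i _ => ?_
  rw [smul_mul_assoc, g_pow_mul_x, smul_smul, mul_smul_comm, mul_comm]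

lemma kCorrection_mul_x :
    S.kCorrection * S.x = S.x * S.kCorrection + S.x * ∑ i ∈ Ico 1 n, S.c i • S.g ^ i := by
  rw [kCorrection, sum_smul_g_pow_mul_x, ← mul_add, ← sum_add_distrib]
  congr 1
  refine sum_congr rfl fun i hi => ?_
  rw [← add_smul]
  congr 1
  have := eps_pow_sub_one_ne_zero hi
  field_simp
  ring

lemma k_mul_x : S.k * S.x = S.x * S.k - S.x := by
  have hxyx : S.x * S.y * S.x = S.x * (S.x * S.y) - S.x * ∑ i ∈ range n, S.c i • S.g ^ i := by
    rw [← S.rel_comm, mul_sub, sub_sub_cancel, mul_assoc]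
  rw [k_eq, sub_mul, smul_mul_assoc, smul_mul_assoc, one_mul, add_mul, hxyx, kCorrection_mul_x,
    sum_c_smul_g_pow]
  simp only [mul_sub, mul_add, mul_smul_comm, mul_one]
  match_scalars <;> field_simp [S.c0_ne] <;> ring

lemma h_pow_four : S.h ^ 4 = 1 := by
  rw [show 4 = 2 * 2 from rfl, pow_mul, S.rel_h2, ← pow_mul, Nat.div_mul_cancel S.heven.two_dvd,
    S.rel_gn]

def hUnit : S.Hˣ :=
  ⟨S.h, S.h ^ 3, by rw [← pow_succ', S.h_pow_four], by rw [← pow_succ, S.h_pow_four]⟩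

def hConj : S.H ≃ₐ[ℂ] S.H := MulSemiringAction.toAlgEquiv ℂ S.H (ConjAct.toConjAct S.hUnit)

lemma hConj_apply (a : S.H) : S.hConj a = S.h * a * S.h ^ 3 := rfl

lemma h_mul_h_pow_three : S.h * S.h ^ 3 = 1 := S.hUnit.mul_inv

lemma hConj_x : S.hConj S.x = S.y := by
  rw [hConj_apply, S.rel_hx, mul_assoc, h_mul_h_pow_three, mul_one]

lemma hConj_y : S.hConj S.y = -S.x := by
  rw [hConj_apply, S.rel_hy, neg_mul, mul_assoc, h_mul_h_pow_three, mul_one]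

lemma hConj_g : S.hConj S.g = S.g ^ (n - 1) := by
  rw [hConj_apply, S.rel_hg, mul_assoc, h_mul_h_pow_three, mul_one]

lemma hConj_g_pow {i : ℕ} (hi : i ≤ n) : S.hConj (S.g ^ i) = S.g ^ (n - i) := by
  rw [map_pow, hConj_g, pow_pred_pow_of_pow_eq_one S.rel_gn hi]

lemma hConj_e (q : ℤ) : S.hConj (S.e q) = S.e (-q) := by
  have hε : eps n ^ q = (eps n ^ (-q)) ^ (n - 1) := by
    rw [pow_sub₀ _ (zpow_ne_zero _ (eps_ne_zero S.hn.ne')) S.hn,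
      zpow_pow_eq_one_of_pow_eq_one (isPrimitiveRoot_eps S.hn.ne').pow_eq_one, pow_one, one_mul,
      zpow_neg, inv_inv]
  have hgen : S.hConj (eps n ^ q • S.g) = (eps n ^ (-q) • S.g) ^ (n - 1) := by
    rw [map_smul, hConj_g, _root_.smul_pow, ← hε]
  rw [S.e_eq_sum_pow, S.e_eq_sum_pow, map_smul, map_sum]
  simp only [map_pow, hgen]
  rw [geom_sum_pow_pred_of_pow_eq_one (S.smul_g_pow_eq_one _)]

lemma hConj_xy : S.hConj (S.x * S.y) = ∑ i ∈ range n, S.c i • S.g ^ i - S.x * S.y := by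
  rw [map_mul, hConj_x, hConj_y, ← S.rel_comm, mul_neg]
  abel

lemma c_div_eps_pow_sub_one_reflect {i : ℕ} (hi : i ∈ Ico 1 n) :
    S.c ↑(n - i) / (eps n ^ (n - i) - 1) = -S.c i - S.c i / (eps n ^ i - 1) := by
  obtain ⟨h1, h2⟩ := mem_Ico.1 hi
  have hc : S.c ↑(n - i) = S.c i := by
    rw [Nat.cast_sub h2.le, sub_eq_neg_add, S.c_per, S.c_symm]
  have hε : eps n ^ (n - i) = (eps n ^ i)⁻¹ := by
    rw [pow_sub₀ _ (eps_ne_zero S.hn.ne') h2.le, (isPrimitiveRoot_eps S.hn.ne').pow_eq_one, one_mul]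
  have h0 : eps n ^ i ≠ 0 := pow_ne_zero _ (eps_ne_zero S.hn.ne')
  have h1' := eps_pow_sub_one_ne_zero hi
  have h2' : 1 - eps n ^ i ≠ 0 := by rwa [← neg_sub, neg_ne_zero]
  rw [hc, hε]
  field_simp
  ring

lemma hConj_kCorrection :
    S.hConj S.kCorrection = -(∑ i ∈ Ico 1 n, S.c i • S.g ^ i) - S.kCorrection := by
  let f : ℕ → S.H := fun j => (S.c ↑(n - j) / (eps n ^ (n - j) - 1)) • S.g ^ j
  calc S.hConj S.kCorrection
      = ∑ i ∈ Ico 1 n, f (n - i) := by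
        rw [kCorrection, map_sum]
        refine sum_congr rfl fun i hi => ?_
        have hi' := mem_Ico.1 hi
        rw [map_smul, S.hConj_g_pow hi'.2.le]
        simp only [f, Nat.sub_sub_self hi'.2.le]
    _ = ∑ i ∈ Ico 1 n, f i := by rw [sum_Ico_reflect f 1 (Nat.le_succ n)]; simp
    _ = ∑ i ∈ Ico 1 n, (-(S.c i • S.g ^ i) - (S.c i / (eps n ^ i - 1)) • S.g ^ i) :=
        sum_congr rfl fun i hi => by
          simp only [f]
          rw [S.c_div_eps_pow_sub_one_reflect hi, sub_smul, neg_smul]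
    _ = _ := by rw [sum_sub_distrib, sum_neg_distrib, kCorrection]

lemma hConj_k : S.hConj S.k = -S.k := by
  rw [k_eq, map_sub, map_smul, map_add, hConj_xy, hConj_kCorrection, map_smul, map_one,
    sum_c_smul_g_pow]
  match_scalars <;> field_simp [S.c0_ne] <;> ring

lemma k_mul_y : S.k * S.y = S.y * S.k + S.y := by
  have h := congrArg S.hConj S.k_mul_x
  rwa [map_mul, map_sub, map_mul, hConj_k, hConj_x, neg_mul, mul_neg, ← neg_add', neg_inj] at h

variable (β : ℤ → ℂ)

def xyFactor (i : ℕ) : S.H :=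
  S.c 0 • (S.k + (i : ℂ) • 1) + ∑ q ∈ range n, β (q + i) • S.e q

lemma xyFactor_mul_y (hβ : Function.Periodic β n) (i : ℕ) :
    S.xyFactor β i * S.y = S.y * S.xyFactor β (i + 1) := by
  have hper : Function.Periodic (fun t : ℤ => β (t + ↑(i + 1)) • (S.y * S.e t)) n := fun t => by
    dsimp only
    rw [add_right_comm, hβ, S.e_periodic]
  have hsum : (∑ q ∈ range n, β (q + i) • S.e q) * S.y =
      S.y * ∑ q ∈ range n, β (q + ↑(i + 1)) • S.e q := by
    simp only [sum_mul, mul_sum, smul_mul_assoc, e_mul_y, mul_smul_comm]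
    rw [← hper.sum_range_comp_add (-1)]
    refine sum_congr rfl fun q _ => ?_
    push_cast
    ring_nf
  rw [xyFactor, xyFactor, add_mul, mul_add, hsum, smul_mul_assoc, add_mul, k_mul_y,
    smul_mul_assoc, one_mul]
  simp only [mul_add, mul_smul_comm, mul_one]
  match_scalars <;> ring

lemma xyFactor_mul_y_pow (hβ : Function.Periodic β n) (i b : ℕ) :
    S.xyFactor β i * S.y ^ b = S.y ^ b * S.xyFactor β (i + b) := by
  induction b with
  | zero => simp
  | succ b ih =>
    rw [pow_succ, ← mul_assoc, ih, mul_assoc, S.xyFactor_mul_y β hβ, ← mul_assoc, ← pow_succ,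
      add_assoc]

lemma x_pow_mul_y_pow (hβ : Function.Periodic β n) (hxy : S.x * S.y = S.xyFactor β 0) (a : ℕ) :
    S.x ^ a * S.y ^ a = ((List.range a).map (S.xyFactor β)).prod := by
  induction a with
  | zero => simp
  | succ a ih =>
    rw [List.prod_range_succ, ← ih, pow_succ, pow_succ', mul_assoc, ← mul_assoc S.x, hxy,
      S.xyFactor_mul_y_pow β hβ, zero_add, ← mul_assoc]

lemma xyFactor_mul_e (hβ : Function.Periodic β n) (i : ℕ) (q : ℤ) :
    S.xyFactor β i * S.e q = S.e q * (S.c 0 • (S.k + (i : ℂ) • 1) + β (q + i) • 1) := by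
  have hper : Function.Periodic (fun t : ℤ => β (t + i) • S.e q) n := fun t => by
    dsimp only
    rw [add_right_comm, hβ]
  have hsum : (∑ q' ∈ range n, β (q' + i) • S.e q') * S.e q = β (q + i) • S.e q := by
    simp only [sum_mul, smul_mul_assoc, e_mul_e, smul_ite, smul_zero]
    exact hper.sum_range_ite_dvd_sub S.hn q
  have hk : Commute (S.e q) (S.k + (i : ℂ) • 1) :=
    (S.commute_e_k q).add_right ((Commute.one_right _).smul_right _)
  rw [xyFactor, add_mul, hsum, smul_mul_assoc, ← hk.eq]
  simp only [mul_add, mul_smul_comm, mul_one]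

lemma hConj_xyFactor (i : ℕ) :
    S.hConj (S.xyFactor β i) =
      S.c 0 • (-S.k + (i : ℂ) • 1) + ∑ q ∈ range n, β (q + i) • S.e (-q) := by
  simp only [xyFactor, map_add, map_smul, map_sum, map_one, hConj_k, hConj_e]

lemma y_pow_mul_x_pow (a : ℕ) : S.y ^ a * S.x ^ a = (-1 : ℂ) ^ a • S.hConj (S.x ^ a * S.y ^ a) := by
  rw [map_mul, map_pow, map_pow, hConj_x, hConj_y, ← neg_one_smul ℂ S.x, _root_.smul_pow,
    mul_smul_comm, smul_smul, ← mul_pow, neg_one_mul, neg_neg, one_pow, one_smul]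

end HcSetup

theorem statement1_general {n : ℕ} (S : HcSetup n) (β : ℤ → ℂ)
    (hβper : ∀ q : ℤ, β (q + n) = β q)
    (hβ : S.x * S.y = S.c 0 • S.k + ∑ q ∈ Finset.range n, β (q : ℤ) • S.e (q : ℤ))
    (a : ℕ) :
    (S.x ^ a * S.y ^ a =
      ((List.range a).map (fun i : ℕ =>
        S.c 0 • (S.k + (i : ℂ) • (1 : S.H)) +
          ∑ q ∈ Finset.range n, β ((q : ℤ) + (i : ℤ)) • S.e (q : ℤ))).prod) ∧
    (S.y ^ a * S.x ^ a =
      (-1 : ℂ) ^ a • ((List.range a).map (fun i : ℕ =>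
        S.c 0 • (-S.k + (i : ℂ) • (1 : S.H)) +
          ∑ q ∈ Finset.range n, β ((q : ℤ) + (i : ℤ)) • S.e (-(q : ℤ)))).prod) ∧
    (∀ q : ℤ,
      S.x ^ a * S.y ^ a * S.e q =
        S.e q * ((List.range a).map (fun i : ℕ =>
          S.c 0 • (S.k + (i : ℂ) • (1 : S.H)) + β (q + (i : ℤ)) • (1 : S.H))).prod) ∧
    (∀ q : ℤ,
      S.y ^ a * S.x ^ a * S.e q =
        (-1 : ℂ) ^ a • (S.e q * ((List.range a).map (fun i : ℕ =>
          S.c 0 • (-S.k + (i : ℂ) • (1 : S.H)) + β (-q + (i : ℤ)) • (1 : S.H))).prod)) := by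
  have hxy : S.x * S.y = S.xyFactor β 0 := by simpa [HcSetup.xyFactor] using hβ
  have hxaya := S.x_pow_mul_y_pow β hβper hxy a
  have hxaya_e : ∀ q : ℤ, S.x ^ a * S.y ^ a * S.e q = S.e q * ((List.range a).map (fun i : ℕ =>
      S.c 0 • (S.k + (i : ℂ) • (1 : S.H)) + β (q + (i : ℤ)) • (1 : S.H))).prod := fun q => by
    rw [hxaya, List.prod_map_mul_eq_mul_prod_map _ fun i => S.xyFactor_mul_e β hβper i q]
  refine ⟨hxaya, ?_, hxaya_e, fun q => ?_⟩
  · rw [S.y_pow_mul_x_pow, hxaya, map_list_prod, List.map_map]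
    simp only [Function.comp_def, HcSetup.hConj_xyFactor]
  · have hq : S.e q = S.hConj (S.e (-q)) := by rw [S.hConj_e, neg_neg]
    rw [S.y_pow_mul_x_pow, smul_mul_assoc, hq, ← map_mul, hxaya_e, map_mul, ← hq, map_list_prod,
      List.map_map]
    simp only [Function.comp_def, map_add, map_smul, map_one, HcSetup.hConj_k]

/-- formulas for `x^a y^a`, `y^a x^a` and for `x^a y^a e_q`, `y^a x^a e_q`,
where `β` is defined by `xy = c_0 k + Σ_{q=0}^{n-1} β_q e_q` and `β_{q+n} = β_q`. -/
theorem statement1 {n : ℕ} (S : HcSetup n) (β : ℤ → ℂ)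
    (hβper : ∀ q : ℤ, β (q + n) = β q)
    (hβ : S.x * S.y = S.c 0 • S.k + ∑ q ∈ Finset.range n, β (q : ℤ) • S.e (q : ℤ))
    (a : ℕ) (ha : 0 < a) :
    (S.x ^ a * S.y ^ a =
      ((List.range a).map (fun i : ℕ =>
        S.c 0 • (S.k + (i : ℂ) • (1 : S.H)) +
          ∑ q ∈ Finset.range n, β ((q : ℤ) + (i : ℤ)) • S.e (q : ℤ))).prod) ∧
    (S.y ^ a * S.x ^ a =
      (-1 : ℂ) ^ a • ((List.range a).map (fun i : ℕ =>
        S.c 0 • (-S.k + (i : ℂ) • (1 : S.H)) +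
          ∑ q ∈ Finset.range n, β ((q : ℤ) + (i : ℤ)) • S.e (-(q : ℤ)))).prod) ∧
    (∀ q : ℤ,
      S.x ^ a * S.y ^ a * S.e q =
        S.e q * ((List.range a).map (fun i : ℕ =>
          S.c 0 • (S.k + (i : ℂ) • (1 : S.H)) + β (q + (i : ℤ)) • (1 : S.H))).prod) ∧
    (∀ q : ℤ,
      S.y ^ a * S.x ^ a * S.e q =
        (-1 : ℂ) ^ a • (S.e q * ((List.range a).map (fun i : ℕ =>
          S.c 0 • (-S.k + (i : ℂ) • (1 : S.H)) + β (-q + (i : ℤ)) • (1 : S.H))).prod)) :=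
  statement1_general S β hβper hβ a
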